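/- If a DFA has a word w of rank r ≥ 2 and there exists some word of rank at most r−1, then there exists a word of rank at most r−1 whose length is at most 2|w| + n − r + 1. -/

import Mathlib

/-!
Let `S = Qw`, `r = |S|`, and let `χ` be the characteristic vector of `S` in `ℚ^Q`, on which words
act linearly by pushing weights forward along the transition map. The word `wvw` still has rank `r`
iff `vw` maps `S` bijectively onto `S`, iff `χ·vw = χ`. Suppose this holds for all `|v| ≤ n - r + 1`.
Then `χ·w = χ`, so the vectors `x_v = χ·v - χ` with `|v| ≤ n - r + 1` lie in the kernel of `·w`,
which has dimension `n - r`. Their spans `V_k` (over `|v| ≤ k`) therefore stop growing at some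
`k ≤ n - r`, and since `x_{va} = x_v·a + x_a`, a span that stops growing once contains every `x_v`.
Hence `χ·vw = χ`, i.e. `wvw` has rank `r`, for every `v`; as some word has rank `< r`, this is
impossible unless `r = 0`. So some `v` of length `≤ n - r + 1` makes `wvw` the required word.
-/

def actW {Q A : Type*} (δ : Q → A → Q) (q : Q) (w : List A) : Q := w.foldl δ q

def img {Q A : Type*} [Fintype Q] [DecidableEq Q] (δ : Q → A → Q) (w : List A) : Finset Q :=
  Finset.univ.image (fun q => actW δ q w)

open Module Finsupp

section ChainOfSubmodules

variable {K V : Type*} [DivisionRing K] [AddCommGroup V] [Module K V] [FiniteDimensional K V]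

theorem exists_eq_succ_of_finrank_lt {U : ℕ → Submodule K V} (hU : Monotone U) {n : ℕ}
    (hn : finrank K (U n) < n) : ∃ k < n, U k = U (k + 1) := by
  by_contra! hne
  have hgrow : ∀ k ≤ n, k ≤ finrank K (U k) := by
    intro k
    induction k with
    | zero => intro _; exact Nat.zero_le _
    | succ k ih =>
      intro hk
      have hlt : U k < U (k + 1) := lt_of_le_of_ne (hU k.le_succ) (hne k hk)
      have := Submodule.finrank_lt_finrank_of_lt hlt
      have := ih (k.le_succ.trans hk)
      omega
  exact (hgrow n le_rfl).not_gt hn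

end ChainOfSubmodules

section WordSpan

variable (R : Type*) {M A : Type*} [Ring R] [AddCommGroup M] [Module R M]

def wordSpan (x : List A → M) (k : ℕ) : Submodule R M :=
  Submodule.span R (x '' {v | v.length ≤ k})

variable {R} {x : List A → M}

theorem mem_wordSpan {v : List A} {k : ℕ} (hv : v.length ≤ k) : x v ∈ wordSpan R x k :=
  Submodule.subset_span ⟨v, hv, rfl⟩

theorem wordSpan_mono : Monotone (wordSpan R x) := fun _ _ hjk =>
  Submodule.span_mono (Set.image_mono fun _ hv => le_trans hv hjk)

theorem wordSpan_le_iff {k : ℕ} {P : Submodule R M} :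
    wordSpan R x k ≤ P ↔ ∀ v : List A, v.length ≤ k → x v ∈ P := by
  simp [wordSpan, Submodule.span_le, Set.subset_def]

theorem mem_wordSpan_of_eq_succ (ρ : A → M →ₗ[R] M)
    (hx : ∀ v a, x (v ++ [a]) = ρ a (x v) + x [a]) {k : ℕ}
    (hk : wordSpan R x k = wordSpan R x (k + 1)) (v : List A) : x v ∈ wordSpan R x k := by
  have hletter : ∀ a, x [a] ∈ wordSpan R x k := fun a => hk ▸ mem_wordSpan (by simp)
  have hinv : ∀ a, wordSpan R x k ≤ (wordSpan R x k).comap (ρ a) := fun a =>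
    wordSpan_le_iff.mpr fun u hu => by
      have : x (u ++ [a]) ∈ wordSpan R x k := hk ▸ mem_wordSpan (by simpa using hu)
      rw [hx] at this
      simpa using sub_mem this (hletter a)
  induction v using List.reverseRecOn with
  | nil => exact mem_wordSpan (Nat.zero_le k)
  | append_singleton v a ih => rw [hx]; exact add_mem (hinv a ih) (hletter a)

end WordSpan

section CharVec

variable (R : Type*) {α β : Type*} [Semiring R]

noncomputable def charVec (s : Finset α) : α →₀ R := ∑ a ∈ s, single a 1

variable {R}

theorem charVec_apply [DecidableEq α] (s : Finset α) (a : α) :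
    charVec R s a = if a ∈ s then 1 else 0 := by
  simp [charVec, finsetSum_apply, single_apply]

theorem support_charVec [Nontrivial R] [DecidableEq α] (s : Finset α) :
    (charVec R s).support = s := by
  ext a; simp [Finsupp.mem_support_iff, charVec_apply]

theorem mapDomain_charVec_of_injOn [DecidableEq β] {f : α → β} {s : Finset α}
    (hf : Set.InjOn f s) : mapDomain f (charVec R s) = charVec R (s.image f) := by
  simp only [charVec, mapDomain_finsetSum, mapDomain_single]
  exact (Finset.sum_image (f := fun b => single b (1 : R)) hf).symm

theorem mapDomain_charVec_of_image_eq [DecidableEq α] {f : α → α} {s : Finset α}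
    (hf : s.image f = s) : mapDomain f (charVec R s) = charVec R s := by
  rw [mapDomain_charVec_of_injOn (Finset.injOn_of_card_image_eq (by rw [hf])), hf]

theorem subset_image_of_mapDomain_charVec_eq [Nontrivial R] [DecidableEq α] {f : α → α}
    {s : Finset α} (hf : mapDomain f (charVec R s) = charVec R s) : s ⊆ s.image f := by
  conv_lhs => rw [← support_charVec (R := R) s, ← hf]
  exact mapDomain_support.trans (by rw [support_charVec])

end CharVec

theorem finrank_ker_lmapDomain_le (K : Type*) {α β : Type*} [Field K] [Fintype α]
    [DecidableEq β] (f : α → β) :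
    finrank K (LinearMap.ker (lmapDomain K K f)) ≤ Fintype.card α - (Finset.univ.image f).card := by
  have hsec : ∀ b : Finset.univ.image f, ∃ a, f a = b := fun b =>
    (Finset.mem_image.mp b.2).imp fun _ => And.right
  choose g hg using hsec
  have hcomp : (lmapDomain K K f).comp (lmapDomain K K g) = lmapDomain K K Subtype.val := by
    rw [← lmapDomain_comp]; congr; funext b; exact hg b
  have hinj : Function.Injective (lmapDomain K K (Subtype.val : Finset.univ.image f → β)) :=
    mapDomain_injective Subtype.val_injective
  have hrange : (Finset.univ.image f).card ≤ finrank K (LinearMap.range (lmapDomain K K f)) := by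
    calc (Finset.univ.image f).card
        = finrank K (LinearMap.range (lmapDomain K K (Subtype.val : Finset.univ.image f → β))) := by
          rw [LinearMap.finrank_range_of_inj hinj, finrank_finsupp_self, Fintype.card_coe]
      _ ≤ _ := by
          rw [← hcomp]
          exact Submodule.finrank_mono (LinearMap.range_comp_le_range _ _)
  have := LinearMap.finrank_range_add_finrank_ker (lmapDomain K K f)
  rw [finrank_finsupp_self] at this
  omega

section Words

variable {Q A : Type*} (δ : Q → A → Q)

theorem actW_append (q : Q) (u v : List A) : actW δ q (u ++ v) = actW δ (actW δ q u) v :=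
  List.foldl_append

theorem mapDomain_actW_append {M : Type*} [AddCommMonoid M] (u v : List A) (x : Q →₀ M) :
    mapDomain (actW δ · (u ++ v)) x = mapDomain (actW δ · v) (mapDomain (actW δ · u) x) := by
  rw [← mapDomain_comp]
  exact congrArg (mapDomain · x) (funext fun q => actW_append δ q u v)

variable [Fintype Q] [DecidableEq Q]

theorem img_append (u v : List A) : img δ (u ++ v) = (img δ u).image (actW δ · v) := by
  simp only [img, Finset.image_image]
  exact Finset.image_congr fun q _ => actW_append δ q u v

theorem img_append_subset (u v : List A) : img δ (u ++ v) ⊆ img δ v := by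
  rw [img_append]
  exact Finset.image_subset_iff.mpr fun q _ => Finset.mem_image_of_mem _ (Finset.mem_univ q)

theorem card_img_append_le_left (u v : List A) : (img δ (u ++ v)).card ≤ (img δ u).card := by
  rw [img_append]
  exact Finset.card_image_le

theorem card_img_append_le_right (u v : List A) : (img δ (u ++ v)).card ≤ (img δ v).card :=
  Finset.card_le_card (img_append_subset δ u v)

end Words

section RankPreservation

variable {Q A : Type*} [Fintype Q] [DecidableEq Q] (δ : Q → A → Q) (w : List A)

theorem card_img_sandwich_eq_iff (v : List A) :
    (img δ (w ++ v ++ w)).card = (img δ w).card ↔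
      mapDomain (actW δ · (v ++ w)) (charVec ℚ (img δ w)) = charVec ℚ (img δ w) := by
  have himg : img δ (w ++ v ++ w) = (img δ w).image (actW δ · (v ++ w)) := by
    rw [List.append_assoc, img_append]
  have hsub : img δ (w ++ v ++ w) ⊆ img δ w := img_append_subset δ _ _
  constructor
  · intro hcard
    exact mapDomain_charVec_of_image_eq
      (himg ▸ Finset.eq_of_subset_of_card_le hsub hcard.ge)
  · intro hfix
    have := subset_image_of_mapDomain_charVec_eq hfix
    rw [← himg] at this
    rw [Finset.Subset.antisymm hsub this]

noncomputable def wordVec (v : List A) : Q →₀ ℚ :=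
  mapDomain (actW δ · v) (charVec ℚ (img δ w)) - charVec ℚ (img δ w)

theorem wordVec_append_singleton (v : List A) (a : A) :
    wordVec δ w (v ++ [a]) = lmapDomain ℚ ℚ (actW δ · [a]) (wordVec δ w v) + wordVec δ w [a] := by
  simp only [wordVec, map_sub, lmapDomain_apply, mapDomain_actW_append]
  abel

theorem wordVec_mem_ker_iff (v : List A) :
    wordVec δ w v ∈ LinearMap.ker (lmapDomain ℚ ℚ (actW δ · w)) ↔
      mapDomain (actW δ · (v ++ w)) (charVec ℚ (img δ w)) =
        mapDomain (actW δ · w) (charVec ℚ (img δ w)) := by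
  rw [LinearMap.mem_ker, wordVec, map_sub, sub_eq_zero, lmapDomain_apply, lmapDomain_apply,
    ← mapDomain_actW_append]

theorem card_img_sandwich_eq_of_forall_length_le
    (h : ∀ v : List A, v.length ≤ Fintype.card Q - (img δ w).card + 1 →
      (img δ (w ++ v ++ w)).card = (img δ w).card) (v : List A) :
    (img δ (w ++ v ++ w)).card = (img δ w).card := by
  set K := Fintype.card Q - (img δ w).card + 1
  have hfix := fun v hv => (card_img_sandwich_eq_iff δ w v).mp (h v hv)
  have hw : mapDomain (actW δ · w) (charVec ℚ (img δ w)) = charVec ℚ (img δ w) := by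
    simpa using hfix [] (Nat.zero_le _)
  have hker : wordSpan ℚ (wordVec δ w) K ≤ LinearMap.ker (lmapDomain ℚ ℚ (actW δ · w)) :=
    wordSpan_le_iff.mpr fun v hv => (wordVec_mem_ker_iff δ w v).mpr (by rw [hfix v hv, hw])
  obtain ⟨k, hkK, hk⟩ := exists_eq_succ_of_finrank_lt wordSpan_mono (n := K) <|
    calc finrank ℚ (wordSpan ℚ (wordVec δ w) K)
        ≤ finrank ℚ (LinearMap.ker (lmapDomain ℚ ℚ (actW δ · w))) := Submodule.finrank_mono hker
      _ ≤ Fintype.card Q - (img δ w).card := finrank_ker_lmapDomain_le ℚ _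
      _ < K := Nat.lt_succ_self _
  have hv := hker <| wordSpan_mono hkK.le <|
    mem_wordSpan_of_eq_succ _ (wordVec_append_singleton δ w) hk v
  exact (card_img_sandwich_eq_iff δ w v).mpr (((wordVec_mem_ker_iff δ w v).mp hv).trans hw)

end RankPreservation

theorem pin_rank_decrease_general {Q A : Type*} [Fintype Q] [DecidableEq Q] (δ : Q → A → Q)
    (r : ℕ) (w : List A) (hw : (img δ w).card = r)
    (hu : ∃ u : List A, (img δ u).card ≤ r - 1) :
    ∃ u : List A, (img δ u).card ≤ r - 1 ∧
      u.length ≤ 2 * w.length + Fintype.card Q - r + 1 := by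
  subst hw
  obtain ⟨u₀, hu₀⟩ := hu
  by_cases hshort : ∀ v : List A, v.length ≤ Fintype.card Q - (img δ w).card + 1 →
      (img δ (w ++ v ++ w)).card = (img δ w).card
  · -- the rank of `w u₀ w` is then both `r` and at most `r - 1`, so `r = 0`
    have hsandwich := card_img_sandwich_eq_of_forall_length_le δ w hshort u₀
    have hle := (card_img_append_le_left δ (w ++ u₀) w).trans (card_img_append_le_right δ w u₀)
    exact ⟨w, by omega, by omega⟩
  · push Not at hshort
    obtain ⟨v, hv, hne⟩ := hshort
    have hle := card_img_append_le_right δ (w ++ v) w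
    have hrank := Finset.card_le_univ (img δ w)
    refine ⟨w ++ v ++ w, by omega, ?_⟩
    simp only [List.length_append]
    omega

/-- Pin's lemma: if w has rank r ≥ 2 and some word has rank ≤ r-1, then
there is such a word of length at most 2|w| + n - r + 1. -/
theorem pin_rank_decrease {Q A : Type*} [Fintype Q] [DecidableEq Q] (δ : Q → A → Q)
    (r : ℕ) (hr : 2 ≤ r) (w : List A) (hw : (img δ w).card = r)
    (hu : ∃ u : List A, (img δ u).card ≤ r - 1) :
    ∃ u : List A, (img δ u).card ≤ r - 1 ∧
      u.length ≤ 2 * w.length + Fintype.card Q - r + 1 :=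
  pin_rank_decrease_general δ r w hw hu
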